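/- Let a, b ∈ ℝ with a ≠ 1/3, let T > 0, μ > 0, z₀ ∈ ℝ, and let q, h, w, z : [0, T] → ℝ be continuously differentiable functions satisfying the (q,h,w,z) system with parameters a, b, with q(0) = μ and z(0) = z₀. Suppose q(t) ∈ [0, μ] for all t ∈ [0, T] and that L_a(r) ≠ 0 with constant sign for all r ∈ [0, μ]. Define g(r) = z₀ · (|L_a(r)|/|L_a(μ)|)^{(2−b)/(2(1−3a))} / L_a(r). Then for all t ∈ [0, T], w(t)² = w(0)² − 2(2 − b)·∫_{μ}^{q(t)} (1 − e^{−r})·e^{−r}·g(r) dr. -/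

import Mathlib

open Real Set intervalIntegral

/-- The `(q,h,w,z)` ODE system with parameters `a`, `b`, holding (in the sense of one-sided
derivatives within `s`) at every point of `s`. -/
def QHWZSystem (a b : ℝ) (s : Set ℝ) (q h w z : ℝ → ℝ) : Prop :=
  ∀ t ∈ s,
    HasDerivWithinAt q (h t * w t * (1 - a - (1 - 3 * a) * Real.exp (-(2 * q t)))) s t ∧
    HasDerivWithinAt h (-(2 - b) * w t * z t * (1 + Real.exp (-q t)) * Real.exp (-q t)) s t ∧
    HasDerivWithinAt w (-(2 - b) * h t * z t * (1 - Real.exp (-q t)) * Real.exp (-q t)) s t ∧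
    HasDerivWithinAt z ((2 - b) * h t * w t * z t * Real.exp (-(2 * q t))) s t

/-- `L_a(r) = 1 - a - (1 - 3a)e^{-2r}`. -/
noncomputable def Lfun (a r : ℝ) : ℝ := 1 - a - (1 - 3 * a) * Real.exp (-(2 * r))

private lemma Lfun_hasDerivAt (a r : ℝ) :
    HasDerivAt (Lfun a) (2 * (1 - 3 * a) * Real.exp (-(2 * r))) r := by
  have h1 : HasDerivAt (fun r : ℝ => Real.exp (-(2 * r))) (-2 * Real.exp (-(2 * r))) r := by
    have h0 : HasDerivAt (fun r : ℝ => -(2 * r)) (-2) r := by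
      exact ((hasDerivAt_id r).const_mul (2 : ℝ)).neg.congr_deriv (by simp)
    refine ((Real.hasDerivAt_exp (-(2 * r))).comp r h0).congr_deriv ?_
    ring
  have := (h1.const_mul (1 - 3 * a)).const_sub (1 - a)
  have heq : (fun r : ℝ => 1 - a - (1 - 3 * a) * Real.exp (-(2 * r))) = Lfun a := rfl
  rw [heq] at this
  exact this.congr_deriv (by ring)

private lemma const_of_derivWithin_zero {T : ℝ} (hT : 0 < T) (f : ℝ → ℝ)
    (hf : ∀ t ∈ Set.Icc (0 : ℝ) T, HasDerivWithinAt f 0 (Set.Icc 0 T) t) :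
    ∀ t ∈ Set.Icc (0 : ℝ) T, f t = f 0 := by
  intro t ht
  have hd : DifferentiableOn ℝ f (Set.Icc 0 T) := fun x hx => (hf x hx).differentiableWithinAt
  refine (convex_Icc (0 : ℝ) T).is_const_of_fderivWithin_eq_zero hd ?_ ht
    (Set.left_mem_Icc.mpr hT.le)
  intro x hx
  have h0 := (hf x hx).hasFDerivWithinAt
  rw [h0.fderivWithin ((uniqueDiffOn_Icc hT) x hx)]
  ext
  simp

theorem w_squared_formula (a b T μ z₀ : ℝ) (ha : a ≠ 1 / 3) (hT : 0 < T) (hμ : 0 < μ)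
    (q h w z : ℝ → ℝ)
    (hsys : QHWZSystem a b (Set.Icc 0 T) q h w z)
    (hq0 : q 0 = μ) (hz0 : z 0 = z₀)
    (hrange : ∀ t ∈ Set.Icc (0 : ℝ) T, q t ∈ Set.Icc 0 μ)
    (hsign : (∀ r ∈ Set.Icc (0 : ℝ) μ, 0 < Lfun a r) ∨ (∀ r ∈ Set.Icc (0 : ℝ) μ, Lfun a r < 0)) :
    ∀ t ∈ Set.Icc (0 : ℝ) T,
      w t ^ 2 = w 0 ^ 2 - 2 * (2 - b) *
        ∫ r in μ..q t,
          (1 - Real.exp (-r)) * Real.exp (-r) *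
            (z₀ * (|Lfun a r| / |Lfun a μ|) ^ ((2 - b) / (2 * (1 - 3 * a))) / Lfun a r) := by
  have ha' : (1 : ℝ) - 3 * a ≠ 0 := by
    intro hh; apply ha; linarith
  set c : ℝ := (2 - b) / (2 * (1 - 3 * a)) with hc
  have hcc : c * (2 * (1 - 3 * a)) = 2 - b := by
    rw [hc]; exact div_mul_cancel₀ _ (mul_ne_zero two_ne_zero ha')
  obtain ⟨ε, hε1, hε⟩ : ∃ ε : ℝ, (ε = 1 ∨ ε = -1) ∧
      ∀ r ∈ Set.Icc (0 : ℝ) μ, 0 < ε * Lfun a r := by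
    rcases hsign with hs | hs
    · exact ⟨1, Or.inl rfl, fun r hr => by simpa using hs r hr⟩
    · exact ⟨-1, Or.inr rfl, fun r hr => by have := hs r hr; nlinarith⟩
  have hμmem : μ ∈ Set.Icc (0 : ℝ) μ := ⟨hμ.le, le_refl μ⟩
  have habs : ∀ r ∈ Set.Icc (0 : ℝ) μ, |Lfun a r| = ε * Lfun a r := by
    intro r hr
    have h1 := hε r hr
    rcases hε1 with h | h <;> subst h
    · rw [one_mul] at h1 ⊢; exact abs_of_pos h1
    · have : Lfun a r < 0 := by nlinarith
      rw [abs_of_neg this]; ring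
  have hLne : ∀ r ∈ Set.Icc (0 : ℝ) μ, Lfun a r ≠ 0 := by
    intro r hr h0
    have := hε r hr
    rw [h0, mul_zero] at this
    exact lt_irrefl 0 this
  -- Step 1 : the formula for z
  set u : ℝ → ℝ := fun t => ε * Lfun a (q t) with hu_def
  set P : ℝ → ℝ := fun t => u t ^ c with hP_def
  have hupos : ∀ t ∈ Set.Icc (0 : ℝ) T, 0 < u t := fun t ht => hε (q t) (hrange t ht)
  have hPpos : ∀ t ∈ Set.Icc (0 : ℝ) T, 0 < P t :=
    fun t ht => Real.rpow_pos_of_pos (hupos t ht) c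
  have hPd : ∀ t ∈ Set.Icc (0 : ℝ) T,
      HasDerivWithinAt P
        ((2 - b) * h t * w t * Real.exp (-(2 * q t)) * P t) (Set.Icc 0 T) t := by
    intro t ht
    obtain ⟨hq', -, -, -⟩ := hsys t ht
    have hq2 : HasDerivWithinAt q (h t * w t * Lfun a (q t)) (Set.Icc 0 T) t := hq'
    have hud : HasDerivWithinAt u
        (ε * (2 * (1 - 3 * a) * Real.exp (-(2 * q t)) * (h t * w t * Lfun a (q t))))
        (Set.Icc 0 T) t :=
      ((Lfun_hasDerivAt a (q t)).comp_hasDerivWithinAt t hq2).const_mul ε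
    have hr : HasDerivAt (fun x : ℝ => x ^ c) (c * u t ^ (c - 1)) (u t) :=
      Real.hasDerivAt_rpow_const (Or.inl (hupos t ht).ne')
    have hcomp := hr.comp_hasDerivWithinAt t hud
    refine hcomp.congr_deriv ?_
    symm
    have h1 : u t ^ (c - 1) * u t = u t ^ c := by
      rw [← Real.rpow_add_one (hupos t ht).ne' (c - 1)]; ring_nf
    have h2 : ε * Lfun a (q t) = u t := rfl
    calc (2 - b) * h t * w t * Real.exp (-(2 * q t)) * P t
        = (c * (2 * (1 - 3 * a))) * h t * w t * Real.exp (-(2 * q t)) *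
            (u t ^ (c - 1) * u t) := by rw [hcc, h1]
      _ = c * u t ^ (c - 1) *
            (2 * (1 - 3 * a) * Real.exp (-(2 * q t)) * (h t * w t * (ε * Lfun a (q t)))) := by
          rw [h2]; ring
      _ = c * u t ^ (c - 1) *
            (ε * (2 * (1 - 3 * a) * Real.exp (-(2 * q t)) * (h t * w t * Lfun a (q t)))) := by
          ring
  have hNd : ∀ t ∈ Set.Icc (0 : ℝ) T,
      HasDerivWithinAt (fun t => z t / P t) 0 (Set.Icc 0 T) t := by
    intro t ht
    obtain ⟨-, -, -, hz'⟩ := hsys t ht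
    have hdv := hz'.div (hPd t ht) (hPpos t ht).ne'
    refine hdv.congr_deriv ?_
    apply div_eq_zero_iff.mpr
    left
    ring
  have hzform : ∀ t ∈ Set.Icc (0 : ℝ) T, z t * P 0 = z₀ * P t := by
    intro t ht
    have := const_of_derivWithin_zero hT (fun t => z t / P t) hNd t ht
    have h0T : (0 : ℝ) ∈ Set.Icc (0 : ℝ) T := Set.left_mem_Icc.mpr hT.le
    have hP0 := (hPpos 0 h0T).ne'
    have hPt := (hPpos t ht).ne'
    field_simp at this
    rw [hz0] at this
    linarith [this]
  -- Step 2 : the integrand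
  set f : ℝ → ℝ := fun r => (1 - Real.exp (-r)) * Real.exp (-r) *
      (z₀ * (|Lfun a r| / |Lfun a μ|) ^ c / Lfun a r) with hf_def
  have hLcont : Continuous (Lfun a) := by
    unfold Lfun; fun_prop
  have hfc : ContinuousOn f (Set.Icc 0 μ) := by
    apply ContinuousOn.mul
    · exact Continuous.continuousOn (by fun_prop)
    · apply ContinuousOn.div
      · apply continuousOn_const.mul
        apply ContinuousOn.rpow_const
        · exact (hLcont.abs.continuousOn.div_const _)
        · intro x hx
          left
          exact div_ne_zero (abs_ne_zero.mpr (hLne x hx)) (abs_ne_zero.mpr (hLne μ hμmem))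
      · exact hLcont.continuousOn
      · exact hLne
  set ft : ℝ → ℝ := fun r => f (Set.projIcc 0 μ hμ.le r) with hft_def
  have hftc : Continuous ft :=
    hfc.comp_continuous (continuous_subtype_val.comp continuous_projIcc)
      (fun x => (Set.projIcc 0 μ hμ.le x).2)
  have hfteq : ∀ r ∈ Set.Icc (0 : ℝ) μ, ft r = f r := by
    intro r hr
    rw [hft_def]
    simp [Set.projIcc_of_mem hμ.le hr]
  set F : ℝ → ℝ := fun x => ∫ r in μ..x, ft r with hF_def
  have hFd : ∀ x : ℝ, HasDerivAt F (ft x) x := by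
    intro x
    exact intervalIntegral.integral_hasDerivAt_right (hftc.intervalIntegrable μ x)
      (hftc.stronglyMeasurableAtFilter MeasureTheory.volume (nhds x)) hftc.continuousAt
  set Φ : ℝ → ℝ := fun t => w t ^ 2 + 2 * (2 - b) * F (q t) with hΦ_def
  have hΦd : ∀ t ∈ Set.Icc (0 : ℝ) T, HasDerivWithinAt Φ 0 (Set.Icc 0 T) t := by
    intro t ht
    obtain ⟨hq', -, hw', -⟩ := hsys t ht
    have hq2 : HasDerivWithinAt q (h t * w t * Lfun a (q t)) (Set.Icc 0 T) t := hq'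
    have h1 := hw'.pow 2
    have h2 := ((hFd (q t)).comp_hasDerivWithinAt t hq2).const_mul (2 * (2 - b))
    have hsum := h1.add h2
    refine hsum.congr_deriv ?_
    symm
    have hqmem := hrange t ht
    rw [hfteq (q t) hqmem]
    rw [hf_def]
    simp only
    rw [habs (q t) hqmem, habs μ hμmem,
      Real.div_rpow (hupos t ht).le (hε μ hμmem).le]
    have hz2 := hzform t ht
    have hP0eq : P 0 = (ε * Lfun a μ) ^ c := by rw [hP_def, hu_def]; simp [hq0]
    have hPteq : P t = (ε * Lfun a (q t)) ^ c := rfl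
    rw [← hPteq, ← hP0eq]
    have hP0 := (hPpos 0 (Set.left_mem_Icc.mpr hT.le)).ne'
    have hL := hLne (q t) hqmem
    field_simp
    linear_combination (2 * (2 - b) * w t * h t * (1 - Real.exp (-q t)) * Real.exp (-q t)) * hz2
  have hΦconst := const_of_derivWithin_zero hT Φ hΦd
  intro t ht
  have h1 := hΦconst t ht
  have hFμ : F μ = 0 := by rw [hF_def]; simp
  have hFq0 : F (q 0) = 0 := by rw [hq0]; exact hFμ
  have h2 : w t ^ 2 = w 0 ^ 2 - 2 * (2 - b) * F (q t) := by
    rw [hΦ_def] at h1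
    simp only at h1
    rw [hFq0] at h1
    linarith
  rw [h2]
  congr 1
  rw [hF_def]
  simp only
  congr 1
  apply intervalIntegral.integral_congr
  intro r hr
  have hrmem : r ∈ Set.Icc (0 : ℝ) μ :=
    Set.uIcc_subset_Icc hμmem (hrange t ht) hr
  exact hfteq r hrmem
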